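/- For real x with |x| < π, cosh(x/2) = exp( -Σ_{k=1}^∞ x^{2k}/(2k(2πi)^{2k}) · 2 Σ_{n=1}^∞ (n-1/2)^{-2k} ). Equivalently, log cosh(x/2) = Σ_{k=1}^∞ (-1)^{k+1} λ(2k) x^{2k} / (k (2π)^{2k}) where λ(s) = Σ_{n=1}^∞ (n-1/2)^{-s}. -/

import Mathlib

/-!
Euler's sine product at `2z`, divided by the one at `z`, leaves the odd-indexed factors:
`cos z = ∏ (1 - (z / (π (j + 1/2)))²)`, so `cosh (x/2) = ∏ (1 + a j)` with
`a j = (x / (2π (j + 1/2)))²`. Taking logarithms and expanding each `log (1 + a j)` as a power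
series in `a j` gives a double series which converges absolutely as soon as every `a j < 1`,
i.e. `|x| < π`; swapping the two summations turns the inner sums into `λ(2k)`.
-/

open Filter Finset Topology Real

theorem Finset.prod_range_two_mul {M : Type*} [CommMonoid M] (f : ℕ → M) (n : ℕ) :
    ∏ j ∈ range (2 * n), f j =
      (∏ j ∈ range n, f (2 * j)) * ∏ j ∈ range n, f (2 * j + 1) := by
  induction n with
  | zero => simp
  | succ n ih =>
    rw [Nat.mul_succ, prod_range_succ, prod_range_succ, ih, prod_range_succ, prod_range_succ]
    ac_rfl

namespace Complex

theorem tendsto_mul_prod_one_sub_sq_div (z : ℂ) :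
    Tendsto (fun n : ℕ => z * ∏ j ∈ range n, (1 - (z / (π * (j + 1))) ^ 2)) atTop
      (𝓝 (sin z)) := by
  have h := tendsto_euler_sin_prod (z / π)
  rw [mul_div_cancel₀ _ (ofReal_ne_zero.mpr pi_ne_zero)] at h
  convert h using 6 with n j
  rw [div_pow, div_pow, mul_pow, div_div]

theorem tendsto_prod_one_sub_sq_div_add_half {z : ℂ} (hz : sin z ≠ 0) :
    Tendsto (fun n : ℕ => ∏ j ∈ range n, (1 - (z / (π * (j + 1 / 2))) ^ 2)) atTop
      (𝓝 (cos z)) := by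
  have hsin := (tendsto_mul_prod_one_sub_sq_div z).const_mul 2
  have hsin_two := (tendsto_mul_prod_one_sub_sq_div (2 * z)).comp
    (tendsto_id.const_mul_atTop' two_pos)
  have h2sin : 2 * sin z ≠ 0 := mul_ne_zero two_ne_zero hz
  have hcos : cos z = sin (2 * z) / (2 * sin z) := by
    rw [sin_two_mul]; field_simp
  rw [hcos]
  refine (hsin_two.div hsin h2sin).congr' ?_
  filter_upwards [hsin.eventually_ne h2sin] with n hn
  have heven (j : ℕ) : 2 * z / (π * ((2 * j : ℕ) + 1)) = z / (π * (j + 1 / 2)) := by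
    rw [← mul_div_mul_left z _ two_ne_zero]
    push_cast
    ring
  have hodd (j : ℕ) : 2 * z / (π * ((2 * j + 1 : ℕ) + 1)) = z / (π * (j + 1)) := by
    rw [← mul_div_mul_left z _ two_ne_zero]
    push_cast
    ring
  simp only [Pi.div_apply, Function.comp_apply, id, prod_range_two_mul, heven, hodd]
  rw [div_eq_iff hn]
  ring

end Complex

namespace Real

theorem tendsto_prod_one_add_sq_div_add_half (x : ℝ) :
    Tendsto (fun n : ℕ => ∏ j ∈ range n, (1 + (x / (π * (j + 1 / 2))) ^ 2)) atTop
      (𝓝 (cosh x)) := by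
  rcases eq_or_ne x 0 with rfl | hx
  · simp
  have hsin : Complex.sin (x * Complex.I) ≠ 0 := by
    rw [Complex.sin_mul_I, ← Complex.ofReal_sinh]
    exact mul_ne_zero (Complex.ofReal_ne_zero.mpr (sinh_ne_zero.mpr hx)) Complex.I_ne_zero
  rw [← tendsto_ofReal_iff, Complex.ofReal_cosh, ← Complex.cos_mul_I]
  convert Complex.tendsto_prod_one_sub_sq_div_add_half hsin using 2 with n
  push_cast
  refine prod_congr rfl fun j _ => ?_
  rw [mul_div_right_comm, mul_pow, Complex.I_sq]
  ring

theorem hasSum_log_of_tendsto_prod {f : ℕ → ℝ} {P : ℝ} (hf : ∀ j, 0 < f j)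
    (hs : Summable fun j => log (f j))
    (h : Tendsto (fun n => ∏ j ∈ range n, f j) atTop (𝓝 P)) :
    HasSum (fun j => log (f j)) (log P) := by
  rw [tendsto_nhds_unique h (hasProd_of_hasSum_log hf hs.hasSum).tendsto_prod_nat, log_exp]
  exact hs.hasSum

theorem hasSum_log_one_add_of_abs_lt_one {a : ℝ} (ha : |a| < 1) :
    HasSum (fun k : ℕ => (-1) ^ k * a ^ (k + 1) / (k + 1)) (log (1 + a)) := by
  have h := (hasSum_pow_div_log_of_abs_lt_one (x := -a) (by rwa [abs_neg])).neg
  rw [sub_neg_eq_add, neg_neg] at h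
  have hterm : (fun k : ℕ => -((-a) ^ (k + 1) / (k + 1))) =
      fun k : ℕ => (-1) ^ k * a ^ (k + 1) / (k + 1) := by
    ext k
    rw [neg_pow, pow_succ]
    ring
  rwa [hterm] at h

theorem tsum_log_one_add_eq_tsum_tsum_pow {ι : Type*} {a : ι → ℝ} (ha : Summable a)
    (ha1 : ∀ j, |a j| < 1) :
    ∑' j, log (1 + a j) = ∑' k : ℕ, (-1) ^ k * (∑' j, a j ^ (k + 1)) / (k + 1) := by
  set F : ι → ℕ → ℝ := fun j k => (-1) ^ k * a j ^ (k + 1) / (k + 1)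
  have habs (j : ι) := hasSum_pow_div_log_of_abs_lt_one (x := |a j|) (by rw [abs_abs]; exact ha1 j)
  have hnorm : Summable fun p : ι × ℕ => |a p.1| ^ (p.2 + 1) / (p.2 + 1) := by
    refine (summable_prod_of_nonneg fun p => ?_).mpr ⟨fun j => (habs j).summable, ?_⟩
    · positivity
    · simp only [(habs _).tsum_eq, sub_eq_add_neg]
      exact (summable_log_one_add_of_summable ha.abs.neg).neg
  have hF : Summable (Function.uncurry F) := by
    refine hnorm.of_norm_bounded fun p => le_of_eq ?_
    rw [Function.uncurry_apply_pair, norm_div, norm_mul, norm_pow, norm_pow, norm_neg, norm_one,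
      one_pow, one_mul, Real.norm_eq_abs, Real.norm_of_nonneg (Nat.cast_add_one_pos p.2).le]
  calc ∑' j, log (1 + a j) = ∑' (j) (k), F j k :=
        tsum_congr fun j => (hasSum_log_one_add_of_abs_lt_one (ha1 j)).tsum_eq.symm
    _ = ∑' (k) (j), F j k := hF.tsum_comm.symm
    _ = _ := by simp only [F, tsum_mul_left, tsum_div_const]

end Real

/-- For real `x` with `|x| < π`,
`log cosh(x/2) = Σ_{k=1}^∞ (-1)^{k+1} λ(2k) x^{2k} / (k(2π)^{2k})` where
`λ(2k) = Σ_{n=1}^∞ (n-1/2)^{-2k}`; equivalently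
`cosh(x/2) = exp(-Σ_{k=1}^∞ x^{2k}/(2k(2πi)^{2k})·2λ(2k))`. -/
theorem log_cosh (x : ℝ) (hx : |x| < Real.pi) :
    Real.log (Real.cosh (x / 2))
      = ∑' k : ℕ, (-1 : ℝ) ^ k * (∑' n : ℕ, 1 / ((n : ℝ) + 1 / 2) ^ (2 * (k + 1)))
          * x ^ (2 * (k + 1)) / ((k + 1) * (2 * Real.pi) ^ (2 * (k + 1))) := by
  set a : ℕ → ℝ := fun j => (x / 2 / (π * (j + 1 / 2))) ^ 2
  have ha : Summable a := by
    refine (((summable_one_div_nat_add_rpow (1 / 2) 2).mpr one_lt_two).mul_left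
      ((x / 2 / π) ^ 2)).congr fun j => ?_
    have : (0 : ℝ) < j + 1 / 2 := by positivity
    simp only [a, abs_of_pos this, rpow_two]
    field_simp
  have ha1 (j : ℕ) : |a j| < 1 := by
    have hpos : 0 < π * ((j : ℝ) + 1 / 2) := by positivity
    have h : |x / 2 / (π * (j + 1 / 2))| < 1 := by
      rw [abs_div, abs_of_pos hpos, div_lt_one hpos, abs_div, abs_two]
      nlinarith [pi_pos, (j.cast_nonneg : (0 : ℝ) ≤ j)]
    simpa [a, abs_pow] using pow_lt_one₀ (abs_nonneg _) h two_ne_zero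
  have hlog : HasSum (fun j => log (1 + a j)) (log (cosh (x / 2))) :=
    hasSum_log_of_tendsto_prod (fun j => by positivity) (summable_log_one_add_of_summable ha)
      (tendsto_prod_one_add_sq_div_add_half (x / 2))
  rw [← hlog.tsum_eq, tsum_log_one_add_eq_tsum_tsum_pow ha ha1]
  refine tsum_congr fun k => ?_
  have hpow (j : ℕ) : a j ^ (k + 1) =
      1 / ((j : ℝ) + 1 / 2) ^ (2 * (k + 1)) * (x ^ (2 * (k + 1)) / (2 * π) ^ (2 * (k + 1))) := by
    rw [← pow_mul, div_div, ← mul_assoc, div_pow, mul_pow]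
    field_simp
  simp only [hpow, tsum_mul_right]
  generalize ∑' n : ℕ, 1 / ((n : ℝ) + 1 / 2) ^ (2 * (k + 1)) = S
  field_simp
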